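/- Let (H,R,θ) be a factorizable ribbon Hopf algebra over a field k and let f : H → k be a character. Then B_f is a cylinder-braided right coideal subalgebra of H with universal K-matrix K = (f⊗id)((1⊗θ^{-1})·R·R_21): the element K is invertible, K·b = b·K for every b ∈ B_f, and Δ(K) = (K⊗1)·R·(1⊗K)·R_21 in H⊗H; in particular K satisfies the reflection equation (K⊗1)·R·(1⊗K)·R_21 = R·(1⊗K)·R_21·(K⊗1). -/

import Mathlib

/-!
Write `ρ = (f ⊗ id)(R)` and `σ = (id ⊗ f)(R) = (f ⊗ id)(R₂₁)`. Applying `f` to one leg of the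
hexagon identities shows that `ρ` and `σ` are grouplike, so `ρ ⊗ ρ` and `σ ⊗ σ` commute with `R`
and `R₂₁`; applying it to the middle leg of the Yang–Baxter equation `R₁₂R₁₃R₂₃ = R₂₃R₁₃R₁₂` gives
`(σ ⊗ 1) R (1 ⊗ ρ) = (1 ⊗ ρ) R (σ ⊗ 1)`. As `θ⁻¹` is central with `Δ(θ⁻¹) = (θ⁻¹ ⊗ θ⁻¹) R R₂₁`,
the element `K = θ⁻¹ρσ` then satisfies
`Δ(K) = (K ⊗ 1) R (1 ⊗ K) R₂₁ = R (1 ⊗ K) R₂₁ (K ⊗ 1) = (θ⁻¹ ⊗ θ⁻¹) R R₂₁ (ρσ ⊗ ρσ)`.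
It commutes with `B_f` because `R R₂₁` commutes with every `Δ(h)` and `f ⊗ id` is multiplicative.
-/

open scoped TensorProduct

noncomputable section

variable (k H : Type*) [Field k] [Ring H]

section BialgebraDefs

variable [Bialgebra k H]
/-- The flip `a ⊗ b ↦ b ⊗ a` on `H ⊗[k] H`, as an algebra homomorphism. -/
def tflip : H ⊗[k] H →ₐ[k] H ⊗[k] H := (Algebra.TensorProduct.comm k H H).toAlgHom

/-- `s ⊗ t ↦ s ⊗ t ⊗ 1 : H ⊗ H → H ⊗ H ⊗ H`. -/
def leg12 : H ⊗[k] H →ₐ[k] H ⊗[k] (H ⊗[k] H) :=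
  Algebra.TensorProduct.map (AlgHom.id k H) Algebra.TensorProduct.includeLeft

/-- `s ⊗ t ↦ s ⊗ 1 ⊗ t : H ⊗ H → H ⊗ H ⊗ H`. -/
def leg13 : H ⊗[k] H →ₐ[k] H ⊗[k] (H ⊗[k] H) :=
  Algebra.TensorProduct.map (AlgHom.id k H) Algebra.TensorProduct.includeRight

/-- `s ⊗ t ↦ 1 ⊗ s ⊗ t : H ⊗ H → H ⊗ H ⊗ H`. -/
def leg23 : H ⊗[k] H →ₐ[k] H ⊗[k] (H ⊗[k] H) :=
  Algebra.TensorProduct.includeRight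

/-- `Δ ⊗ id : H ⊗ H → H ⊗ H ⊗ H`. -/
def comulLeft : H ⊗[k] H →ₐ[k] H ⊗[k] (H ⊗[k] H) :=
  (Algebra.TensorProduct.assoc k k k H H H).toAlgHom.comp
    (Algebra.TensorProduct.map (Bialgebra.comulAlgHom k H) (AlgHom.id k H))

/-- `id ⊗ Δ : H ⊗ H → H ⊗ H ⊗ H`. -/
def comulRight : H ⊗[k] H →ₐ[k] H ⊗[k] (H ⊗[k] H) :=
  Algebra.TensorProduct.map (AlgHom.id k H) (Bialgebra.comulAlgHom k H)

/-- `(H, R)` is a braided bialgebra with `R⁻¹ = Rinv`:  `R` is an invertible element of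
`H ⊗ H` satisfying `Δ(x) · R = R · Δ^op(x)` for all `x` and the two hexagon identities
`(Δ ⊗ id)(R) = R₂₃ · R₁₃` and `(id ⊗ Δ)(R) = R₁₂ · R₁₃`. -/
def IsUniversalRMatrix (R Rinv : H ⊗[k] H) : Prop :=
  R * Rinv = 1 ∧ Rinv * R = 1 ∧
  (∀ x : H, Bialgebra.comulAlgHom k H x * R = R * tflip k H (Bialgebra.comulAlgHom k H x)) ∧
  comulLeft k H R = leg23 k H R * leg13 k H R ∧
  comulRight k H R = leg12 k H R * leg13 k H R

/-- `ψ ⊗ id : H ⊗ H → H`, `a ⊗ b ↦ ψ(a) • b`. -/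
def dualTensorId (ψ : H →ₗ[k] k) : H ⊗[k] H →ₗ[k] H :=
  (TensorProduct.lid k H).toLinearMap.comp (TensorProduct.map ψ LinearMap.id)

end BialgebraDefs

section TensorLegs

variable {k H} [Bialgebra k H]

def slantLeft (f : H →ₐ[k] k) : H ⊗[k] H →ₐ[k] H :=
  (Algebra.TensorProduct.lid k H).toAlgHom.comp (Algebra.TensorProduct.map f (AlgHom.id k H))

def slantRight (f : H →ₐ[k] k) : H ⊗[k] H →ₐ[k] H :=
  (Algebra.TensorProduct.rid k k H).toAlgHom.comp (Algebra.TensorProduct.map (AlgHom.id k H) f)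

def slantFirst (f : H →ₐ[k] k) : H ⊗[k] (H ⊗[k] H) →ₐ[k] H ⊗[k] H :=
  (Algebra.TensorProduct.lid k (H ⊗[k] H)).toAlgHom.comp
    (Algebra.TensorProduct.map f (AlgHom.id k (H ⊗[k] H)))

def slantMiddle (f : H →ₐ[k] k) : H ⊗[k] (H ⊗[k] H) →ₐ[k] H ⊗[k] H :=
  Algebra.TensorProduct.map (AlgHom.id k H) (slantLeft f)

def slantLast (f : H →ₐ[k] k) : H ⊗[k] (H ⊗[k] H) →ₐ[k] H ⊗[k] H :=
  Algebra.TensorProduct.map (AlgHom.id k H) (slantRight f)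

variable (f : H →ₐ[k] k)

@[simp] lemma slantLeft_tmul (a b : H) : slantLeft f (a ⊗ₜ[k] b) = f a • b := by
  simp [slantLeft]

@[simp] lemma slantRight_tmul (a b : H) : slantRight f (a ⊗ₜ[k] b) = f b • a := by
  simp [slantRight]

@[simp] lemma slantFirst_tmul (a : H) (X : H ⊗[k] H) :
    slantFirst f (a ⊗ₜ[k] X) = f a • X := by
  simp [slantFirst]

@[simp] lemma tflip_tmul (a b : H) : tflip k H (a ⊗ₜ[k] b) = b ⊗ₜ[k] a := rfl

lemma dualTensorId_eq_slantLeft (X : H ⊗[k] H) :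
    dualTensorId k H f.toLinearMap X = slantLeft f X := by
  induction X using TensorProduct.induction_on <;> simp_all [dualTensorId]

lemma slantLeft_tflip (X : H ⊗[k] H) : slantLeft f (tflip k H X) = slantRight f X := by
  induction X using TensorProduct.induction_on <;> simp_all

lemma slantFirst_leg12 (X : H ⊗[k] H) :
    slantFirst f (leg12 k H X) = slantLeft f X ⊗ₜ[k] 1 := by
  induction X using TensorProduct.induction_on <;>
    simp_all [leg12, TensorProduct.smul_tmul', TensorProduct.add_tmul]

lemma slantFirst_leg13 (X : H ⊗[k] H) :
    slantFirst f (leg13 k H X) = 1 ⊗ₜ[k] slantLeft f X := by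
  induction X using TensorProduct.induction_on <;>
    simp_all [leg13, TensorProduct.tmul_add]

lemma slantFirst_comulRight (X : H ⊗[k] H) :
    slantFirst f (comulRight k H X) = Bialgebra.comulAlgHom k H (slantLeft f X) := by
  induction X using TensorProduct.induction_on <;> simp_all [comulRight]

lemma slantMiddle_leg12 (X : H ⊗[k] H) :
    slantMiddle f (leg12 k H X) = slantRight f X ⊗ₜ[k] 1 := by
  induction X using TensorProduct.induction_on <;>
    simp_all [slantMiddle, leg12, TensorProduct.smul_tmul', TensorProduct.add_tmul]

lemma slantMiddle_leg13 (X : H ⊗[k] H) : slantMiddle f (leg13 k H X) = X := by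
  induction X using TensorProduct.induction_on <;> simp_all [slantMiddle, leg13]

lemma slantMiddle_leg23 (X : H ⊗[k] H) :
    slantMiddle f (leg23 k H X) = 1 ⊗ₜ[k] slantLeft f X := by
  simp [slantMiddle, leg23]

lemma slantLast_leg13 (X : H ⊗[k] H) :
    slantLast f (leg13 k H X) = slantRight f X ⊗ₜ[k] 1 := by
  induction X using TensorProduct.induction_on <;>
    simp_all [slantLast, leg13, TensorProduct.smul_tmul', TensorProduct.add_tmul]

lemma slantLast_leg23 (X : H ⊗[k] H) :
    slantLast f (leg23 k H X) = 1 ⊗ₜ[k] slantRight f X := by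
  simp [slantLast, leg23]

lemma slantLast_assoc_tmul (u : H ⊗[k] H) (b : H) :
    slantLast f (Algebra.TensorProduct.assoc k k k H H H (u ⊗ₜ[k] b)) = f b • u := by
  induction u using TensorProduct.induction_on <;>
    simp_all [slantLast, TensorProduct.add_tmul]

lemma slantLast_comulLeft (X : H ⊗[k] H) :
    slantLast f (comulLeft k H X) = Bialgebra.comulAlgHom k H (slantRight f X) := by
  induction X using TensorProduct.induction_on <;> simp_all [comulLeft, slantLast_assoc_tmul]

lemma tflip_tflip (X : H ⊗[k] H) : tflip k H (tflip k H X) = X := by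
  induction X using TensorProduct.induction_on <;> simp_all

lemma tmul_one_mem_center {t : H} (ht : t ∈ Subalgebra.center k H) :
    t ⊗ₜ[k] (1 : H) ∈ Subalgebra.center k (H ⊗[k] H) :=
  Algebra.TensorProduct.includeLeft_map_center_le k H H ⟨t, ht, rfl⟩

lemma one_tmul_mem_center {t : H} (ht : t ∈ Subalgebra.center k H) :
    (1 : H) ⊗ₜ[k] t ∈ Subalgebra.center k (H ⊗[k] H) :=
  Algebra.TensorProduct.includeRight_map_center_le k H H ⟨t, ht, rfl⟩

def flip23 : H ⊗[k] (H ⊗[k] H) →ₐ[k] H ⊗[k] (H ⊗[k] H) :=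
  Algebra.TensorProduct.map (AlgHom.id k H) (tflip k H)

lemma flip23_leg12 (X : H ⊗[k] H) : flip23 (leg12 k H X) = leg13 k H X := by
  induction X using TensorProduct.induction_on <;> simp_all [flip23, leg12, leg13]

lemma flip23_leg13 (X : H ⊗[k] H) : flip23 (leg13 k H X) = leg12 k H X := by
  induction X using TensorProduct.induction_on <;> simp_all [flip23, leg12, leg13]

end TensorLegs

namespace IsUniversalRMatrix

variable {k H} [Bialgebra k H]
variable {R Rinv : H ⊗[k] H} (hR : IsUniversalRMatrix k H R Rinv)
include hR

lemma isUnit : IsUnit R := ⟨⟨R, Rinv, hR.1, hR.2.1⟩, rfl⟩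

lemma tflip_comul_mul (x : H) :
    tflip k H (Bialgebra.comulAlgHom k H x) * tflip k H R
      = tflip k H R * Bialgebra.comulAlgHom k H x := by
  simpa only [map_mul, tflip_tflip] using congrArg (tflip k H) (hR.2.2.1 x)

lemma commute_comul_mul_tflip (x : H) :
    Commute (Bialgebra.comulAlgHom k H x) (R * tflip k H R) := by
  rw [Commute, SemiconjBy, ← mul_assoc, hR.2.2.1, mul_assoc, hR.tflip_comul_mul, mul_assoc]

lemma commute_tmul_self {g : H} (hg : Bialgebra.comulAlgHom k H g = g ⊗ₜ[k] g) :
    Commute (g ⊗ₜ[k] g) R := by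
  simpa [Commute, SemiconjBy, hg] using hR.2.2.1 g

lemma commute_tmul_self_tflip {g : H} (hg : Bialgebra.comulAlgHom k H g = g ⊗ₜ[k] g) :
    Commute (g ⊗ₜ[k] g) (tflip k H R) := by
  simpa [Commute, SemiconjBy, hg] using hR.tflip_comul_mul g

lemma comulRight_mul_leg23 (X : H ⊗[k] H) :
    comulRight k H X * leg23 k H R = leg23 k H R * flip23 (comulRight k H X) := by
  induction X using TensorProduct.induction_on with
  | zero => simp
  | tmul a b =>
    simpa [comulRight, flip23, leg23] using congrArg (a ⊗ₜ[k] ·) (hR.2.2.1 b)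
  | add X Y hX hY => simp only [map_add, add_mul, mul_add, hX, hY]

lemma yangBaxter :
    leg12 k H R * leg13 k H R * leg23 k H R = leg23 k H R * leg13 k H R * leg12 k H R := by
  rw [← hR.2.2.2.2, hR.comulRight_mul_leg23, hR.2.2.2.2, map_mul, flip23_leg12, flip23_leg13,
    mul_assoc]

lemma comul_ribbon_inv {θ θinv : H} (hθ : θ * θinv = 1) (hθ' : θinv * θ = 1)
    (hΔθ : Bialgebra.comulAlgHom k H θ = (tflip k H Rinv * Rinv) * (θ ⊗ₜ[k] θ)) :
    Bialgebra.comulAlgHom k H θinv = (θinv ⊗ₜ[k] θinv) * (R * tflip k H R) := by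
  refine left_inv_eq_right_inv (a := Bialgebra.comulAlgHom k H θ) ?_ ?_
  · rw [← map_mul, hθ', map_one]
  · rw [hΔθ, mul_assoc, ← mul_assoc (θ ⊗ₜ[k] θ), Algebra.TensorProduct.tmul_mul_tmul, hθ,
      ← Algebra.TensorProduct.one_def, one_mul, mul_assoc, ← mul_assoc Rinv, hR.2.1, one_mul,
      ← map_mul, hR.2.1, map_one]

variable (f : H →ₐ[k] k)

lemma slantRight_tmul_one_mul_mul_one_tmul_slantLeft :
    (slantRight f R ⊗ₜ[k] 1) * R * (1 ⊗ₜ[k] slantLeft f R)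
      = (1 ⊗ₜ[k] slantLeft f R) * R * (slantRight f R ⊗ₜ[k] 1) := by
  simpa only [map_mul, slantMiddle_leg12, slantMiddle_leg13, slantMiddle_leg23]
    using congrArg (slantMiddle f) hR.yangBaxter

lemma comul_slantLeft :
    Bialgebra.comulAlgHom k H (slantLeft f R) = slantLeft f R ⊗ₜ[k] slantLeft f R := by
  rw [← slantFirst_comulRight, hR.2.2.2.2, map_mul, slantFirst_leg12, slantFirst_leg13,
    Algebra.TensorProduct.tmul_mul_tmul, mul_one, one_mul]

lemma comul_slantRight :
    Bialgebra.comulAlgHom k H (slantRight f R) = slantRight f R ⊗ₜ[k] slantRight f R := by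
  rw [← slantLast_comulLeft, hR.2.2.2.1, map_mul, slantLast_leg23, slantLast_leg13,
    Algebra.TensorProduct.tmul_mul_tmul, mul_one, one_mul]

variable {t : H} (ht : t ∈ Subalgebra.center k H)
include ht

lemma reflection_lhs_eq :
    ((t * slantLeft f R * slantRight f R) ⊗ₜ[k] 1) * R
        * (1 ⊗ₜ[k] (t * slantLeft f R * slantRight f R)) * tflip k H R
      = (t ⊗ₜ[k] t) * (R * tflip k H R)
        * ((slantLeft f R * slantRight f R) ⊗ₜ[k] (slantLeft f R * slantRight f R)) := by
  have pull : ∀ X Y : H ⊗[k] H, X * ((1 ⊗ₜ[k] t) * Y) = (1 ⊗ₜ[k] t) * (X * Y) :=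
    fun X Y => ((Set.mem_center_iff.1 (one_tmul_mem_center ht)).left_comm X Y).symm
  have hρ := hR.commute_tmul_self (hR.comul_slantLeft f)
  have hρ' := hR.commute_tmul_self_tflip (hR.comul_slantLeft f)
  have hσ' := hR.commute_tmul_self_tflip (hR.comul_slantRight f)
  have hYB := hR.slantRight_tmul_one_mul_mul_one_tmul_slantLeft f
  set ρ := slantLeft f R
  set σ := slantRight f R
  calc ((t * ρ * σ) ⊗ₜ[k] 1) * R * (1 ⊗ₜ[k] (t * ρ * σ)) * tflip k H R
      = (t ⊗ₜ[k] t) * ((ρ ⊗ₜ[k] 1) * ((σ ⊗ₜ[k] 1) * R * (1 ⊗ₜ[k] ρ)) * (1 ⊗ₜ[k] σ)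
          * tflip k H R) := by
        have e1 : (t * ρ * σ) ⊗ₜ[k] (1 : H) = (t ⊗ₜ[k] 1) * ((ρ ⊗ₜ[k] 1) * (σ ⊗ₜ[k] 1)) := by
          simp [mul_assoc]
        have e2 : (1 : H) ⊗ₜ[k] (t * ρ * σ) = (1 ⊗ₜ[k] t) * ((1 ⊗ₜ[k] ρ) * (1 ⊗ₜ[k] σ)) := by
          simp [mul_assoc]
        have e3 : t ⊗ₜ[k] t = (t ⊗ₜ[k] 1) * (1 ⊗ₜ[k] t) := by simp
        rw [e1, e2, e3]
        simp only [mul_assoc, pull]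
    _ = (t ⊗ₜ[k] t) * ((ρ ⊗ₜ[k] ρ) * R * (σ ⊗ₜ[k] σ) * tflip k H R) := by
        rw [hYB]
        simp only [mul_assoc]
        rw [← mul_assoc (σ ⊗ₜ[k] 1), ← mul_assoc (ρ ⊗ₜ[k] 1), Algebra.TensorProduct.tmul_mul_tmul,
          Algebra.TensorProduct.tmul_mul_tmul, one_mul, mul_one, one_mul, mul_one]
    _ = (t ⊗ₜ[k] t) * ((ρ ⊗ₜ[k] ρ) * (R * tflip k H R) * (σ ⊗ₜ[k] σ)) := by
        rw [mul_assoc (_ * R), hσ'.eq]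
        simp only [mul_assoc]
    _ = (t ⊗ₜ[k] t) * (R * tflip k H R) * ((ρ * σ) ⊗ₜ[k] (ρ * σ)) := by
        rw [(hρ.mul_right hρ').eq]
        simp only [mul_assoc, Algebra.TensorProduct.tmul_mul_tmul]

lemma reflection_rhs_eq :
    R * (1 ⊗ₜ[k] (t * slantLeft f R * slantRight f R)) * tflip k H R
        * ((t * slantLeft f R * slantRight f R) ⊗ₜ[k] 1)
      = (t ⊗ₜ[k] t) * (R * tflip k H R)
        * ((slantLeft f R * slantRight f R) ⊗ₜ[k] (slantLeft f R * slantRight f R)) := by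
  have pull₁ : ∀ X Y : H ⊗[k] H, X * ((t ⊗ₜ[k] 1) * Y) = (t ⊗ₜ[k] 1) * (X * Y) :=
    fun X Y => ((Set.mem_center_iff.1 (tmul_one_mem_center ht)).left_comm X Y).symm
  have pull₂ : ∀ X Y : H ⊗[k] H, X * ((1 ⊗ₜ[k] t) * Y) = (1 ⊗ₜ[k] t) * (X * Y) :=
    fun X Y => ((Set.mem_center_iff.1 (one_tmul_mem_center ht)).left_comm X Y).symm
  have hρ' := hR.commute_tmul_self_tflip (hR.comul_slantLeft f)
  have hYB : (1 ⊗ₜ[k] slantRight f R) * tflip k H R * (slantLeft f R ⊗ₜ[k] 1)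
      = (slantLeft f R ⊗ₜ[k] 1) * tflip k H R * (1 ⊗ₜ[k] slantRight f R) := by
    simpa using congrArg (tflip k H) (hR.slantRight_tmul_one_mul_mul_one_tmul_slantLeft f)
  set ρ := slantLeft f R
  set σ := slantRight f R
  calc R * (1 ⊗ₜ[k] (t * ρ * σ)) * tflip k H R * ((t * ρ * σ) ⊗ₜ[k] 1)
      = (t ⊗ₜ[k] t) * (R * (1 ⊗ₜ[k] ρ) * ((1 ⊗ₜ[k] σ) * tflip k H R * (ρ ⊗ₜ[k] 1))
          * (σ ⊗ₜ[k] 1)) := by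
        have e1 : (t * ρ * σ) ⊗ₜ[k] (1 : H) = (t ⊗ₜ[k] 1) * ((ρ ⊗ₜ[k] 1) * (σ ⊗ₜ[k] 1)) := by
          simp [mul_assoc]
        have e2 : (1 : H) ⊗ₜ[k] (t * ρ * σ) = (1 ⊗ₜ[k] t) * ((1 ⊗ₜ[k] ρ) * (1 ⊗ₜ[k] σ)) := by
          simp [mul_assoc]
        have e3 : t ⊗ₜ[k] t = (1 ⊗ₜ[k] t) * (t ⊗ₜ[k] 1) := by simp
        rw [e1, e2, e3]
        simp only [mul_assoc, pull₁]
        simp only [pull₂]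
    _ = (t ⊗ₜ[k] t) * (R * (ρ ⊗ₜ[k] ρ) * tflip k H R * (σ ⊗ₜ[k] σ)) := by
        rw [hYB]
        simp only [mul_assoc]
        rw [← mul_assoc (1 ⊗ₜ[k] ρ)]
        simp only [Algebra.TensorProduct.tmul_mul_tmul, one_mul, mul_one]
    _ = (t ⊗ₜ[k] t) * (R * tflip k H R) * ((ρ * σ) ⊗ₜ[k] (ρ * σ)) := by
        rw [mul_assoc R (ρ ⊗ₜ[k] ρ), hρ'.eq]
        simp only [mul_assoc, Algebra.TensorProduct.tmul_mul_tmul]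

end IsUniversalRMatrix

section Hopf

variable [HopfAlgebra k H]

theorem Bf_cylinder_braided_of_factorizable_ribbon
    (R Rinv : H ⊗[k] H) (hR : IsUniversalRMatrix k H R Rinv)
    (θ θinv : H) (hθ : θ * θinv = 1) (hθ' : θinv * θ = 1)
    (hcentral : ∀ x : H, θ * x = x * θ)
    (hΔθ : Bialgebra.comulAlgHom k H θ
      = (tflip k H Rinv * Rinv) * (θ ⊗ₜ[k] θ))
    (f : H →ₐ[k] k)
    (K : H)
    (hKdef : K = dualTensorId k H f.toLinearMap (((1 : H) ⊗ₜ[k] θinv) * R * tflip k H R)) :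
    IsUnit K ∧
    (∀ b ∈ Set.range
        (fun h : H => dualTensorId k H f.toLinearMap (Bialgebra.comulAlgHom k H h)),
      K * b = b * K) ∧
    Bialgebra.comulAlgHom k H K
      = (K ⊗ₜ[k] (1 : H)) * R * ((1 : H) ⊗ₜ[k] K) * tflip k H R ∧
    (K ⊗ₜ[k] (1 : H)) * R * ((1 : H) ⊗ₜ[k] K) * tflip k H R
      = R * ((1 : H) ⊗ₜ[k] K) * tflip k H R * (K ⊗ₜ[k] (1 : H)) := by
  let θu : Hˣ := ⟨θ, θinv, hθ, hθ'⟩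
  have hθinv : θinv ∈ Subalgebra.center k H := Subalgebra.mem_center_iff.2 fun x =>
    (Commute.units_inv_left (u := θu) (hcentral x)).eq.symm
  have hK : K = θinv * slantLeft f R * slantRight f R := by
    rw [hKdef, dualTensorId_eq_slantLeft, map_mul, map_mul, slantLeft_tflip, slantLeft_tmul,
      map_one, one_smul]
  refine ⟨?_, ?_, ?_, ?_⟩
  · rw [hK]
    exact (θu⁻¹.isUnit.mul (hR.isUnit.map _)).mul (hR.isUnit.map _)
  · rintro _ ⟨h, rfl⟩
    simp only [hKdef, dualTensorId_eq_slantLeft, mul_assoc]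
    exact ((Commute.mul_left (Subalgebra.mem_center_iff.1 (one_tmul_mem_center hθinv) _).symm
      (hR.commute_comul_mul_tflip h).symm).map (slantLeft f)).eq
  · rw [hK, hR.reflection_lhs_eq f hθinv, map_mul, map_mul, hR.comul_ribbon_inv hθ hθ' hΔθ,
      hR.comul_slantLeft, hR.comul_slantRight, mul_assoc _ (_ ⊗ₜ[k] _),
      Algebra.TensorProduct.tmul_mul_tmul]
  · rw [hK, hR.reflection_lhs_eq f hθinv, hR.reflection_rhs_eq f hθinv]

end Hopf
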